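/- The projective (ℝ⁺-) stabilizer of the light-cone vector u₀ = (1,0,1) in SO₀(2,1) equals NA: a matrix M ∈ SO₀(2,1) satisfies M·(1,0,1) = c·(1,0,1) for some c > 0 if and only if M = N(r)·A(s) for some r, s ∈ ℝ, where N(r) = [[1 − r²/2, r, r²/2],[−r, 1, r],[−r²/2, r, 1 + r²/2]] and A(s) = [[cosh s, 0, sinh s],[0, 1, 0],[sinh s, 0, cosh s]]. -/

import Mathlib

open Matrix
noncomputable def eta (u : Fin 3 → ℝ) : ℝ := (u 2) ^ 2 - (u 0) ^ 2 - (u 1) ^ 2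

def inSO0 (M : Matrix (Fin 3) (Fin 3) ℝ) : Prop :=
  (∀ u : Fin 3 → ℝ, eta (M *ᵥ u) = eta u) ∧ M.det = 1 ∧ 0 < M 2 2

noncomputable def Amat (s : ℝ) : Matrix (Fin 3) (Fin 3) ℝ :=
  !![Real.cosh s, 0, Real.sinh s;
     0, 1, 0;
     Real.sinh s, 0, Real.cosh s]

noncomputable def Nmat (r : ℝ) : Matrix (Fin 3) (Fin 3) ℝ :=
  !![1 - r ^ 2 / 2, r, r ^ 2 / 2;
     -r, 1, r;
     -r ^ 2 / 2, r, 1 + r ^ 2 / 2]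


/-
Right multiplication by `A(−log c)` turns a matrix with `M u₀ = c u₀` into one fixing `u₀`, using
`A(s) u₀ = eˢ u₀`. A Lorentz matrix `Q` fixing `u₀` also preserves the functional
`v ↦ η(u₀, v) = v₂ − v₀` of the polar form. Evaluated on the columns of `Q`, together with
`Q u₀ = u₀`, `η(Q e₀) = −1` and `η(Q e₀, Q e₁) = 0`, this expresses every entry through
`r = Q₀₁` and `Q₁₁`; the determinant then equals `Q₁₁`, which forces `Q = N(r)`.
-/

local notation "u₀" => ![(1 : ℝ), 0, 1]

def etaForm (u v : Fin 3 → ℝ) : ℝ := u 2 * v 2 - u 0 * v 0 - u 1 * v 1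

lemma etaForm_eq_polarization (u v : Fin 3 → ℝ) :
    etaForm u v = (eta (u + v) - eta u - eta v) / 2 := by
  simp only [etaForm, eta, Pi.add_apply]
  ring

lemma etaForm_mulVec_of_eta_mulVec {Q : Matrix (Fin 3) (Fin 3) ℝ}
    (hQ : ∀ u, eta (Q *ᵥ u) = eta u) (u v : Fin 3 → ℝ) :
    etaForm (Q *ᵥ u) (Q *ᵥ v) = etaForm u v := by
  rw [etaForm_eq_polarization, etaForm_eq_polarization, ← mulVec_add, hQ, hQ, hQ]

lemma eta_mul_mulVec {P Q : Matrix (Fin 3) (Fin 3) ℝ} (hP : ∀ u, eta (P *ᵥ u) = eta u)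
    (hQ : ∀ u, eta (Q *ᵥ u) = eta u) (u : Fin 3 → ℝ) : eta ((P * Q) *ᵥ u) = eta u := by
  rw [← mulVec_mulVec, hP, hQ]

lemma Amat_add (s t : ℝ) : Amat (s + t) = Amat s * Amat t := by
  ext i j
  fin_cases i <;> fin_cases j <;>
    simp [Amat, mul_apply, Fin.sum_univ_three, Real.cosh_add, Real.sinh_add] <;> ring

lemma Amat_zero : Amat 0 = 1 := by
  ext i j
  fin_cases i <;> fin_cases j <;> simp [Amat]

lemma Amat_neg_mul_Amat (s : ℝ) : Amat (-s) * Amat s = 1 := by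
  rw [← Amat_add, neg_add_cancel, Amat_zero]

lemma eta_Amat_mulVec (s : ℝ) (u : Fin 3 → ℝ) : eta (Amat s *ᵥ u) = eta u := by
  simp only [eta, mulVec, dotProduct, Amat, of_apply, cons_val', cons_val_fin_one, cons_val,
    cons_val_one, Fin.sum_univ_three, cons_val_zero, zero_mul, add_zero, one_mul, zero_add]
  linear_combination (u 2 ^ 2 - u 0 ^ 2) * Real.cosh_sq_sub_sinh_sq s

lemma det_Amat (s : ℝ) : (Amat s).det = 1 := by
  simpa [det_fin_three, Amat, sq] using Real.cosh_sq_sub_sinh_sq s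

lemma Amat_mulVec_u₀ (s : ℝ) : Amat s *ᵥ u₀ = Real.exp s • u₀ := by
  ext i
  fin_cases i <;> simp [Amat, mulVec, dotProduct, Fin.sum_univ_three, ← Real.cosh_add_sinh,
    add_comm]

lemma Nmat_mulVec_u₀ (r : ℝ) : Nmat r *ᵥ u₀ = u₀ := by
  ext i
  fin_cases i <;> simp [Nmat, mulVec, dotProduct, Fin.sum_univ_three, neg_div]

lemma eq_Nmat_of_mulVec_u₀ {Q : Matrix (Fin 3) (Fin 3) ℝ}
    (hη : ∀ u, eta (Q *ᵥ u) = eta u) (hdet : Q.det = 1) (hu : Q *ᵥ u₀ = u₀) :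
    Q = Nmat (Q 0 1) := by
  have hform (v : Fin 3 → ℝ) : etaForm u₀ (Q *ᵥ v) = etaForm u₀ v := by
    simpa only [hu] using etaForm_mulVec_of_eta_mulVec hη u₀ v
  have f0 := hform ![1, 0, 0]
  have f1 := hform ![0, 1, 0]
  have n0 := hη ![1, 0, 0]
  have o01 := etaForm_mulVec_of_eta_mulVec hη ![1, 0, 0] ![0, 1, 0]
  have fix0 := congrFun hu 0
  have fix1 := congrFun hu 1
  have fix2 := congrFun hu 2
  simp only [etaForm, eta, cons_val, mulVec, dotProduct, Fin.sum_univ_three, cons_val_zero,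
    cons_val_one, mul_one, mul_zero, one_mul, zero_mul, add_zero, zero_add, sub_zero, zero_sub,
    sub_self, ne_eq, OfNat.ofNat_ne_zero, not_false_eq_true, zero_pow, one_pow]
    at f0 f1 n0 o01 fix0 fix1 fix2
  rw [det_fin_three] at hdet
  set r := Q 0 1
  have h21 : Q 2 1 = r := by linarith
  have h00 : Q 0 0 = Q 2 0 + 1 := by linarith
  have h02 : Q 0 2 = 1 - Q 0 0 := by linarith
  have h12 : Q 1 2 = -Q 1 0 := by linarith
  have h22 : Q 2 2 = 1 - Q 2 0 := by linarith
  have h20 : Q 2 0 = -Q 1 0 ^ 2 / 2 := by rw [h00] at n0; linear_combination -n0 / 2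
  have h11 : Q 1 1 = 1 := by
    rw [h02, h12, h22, h00, h21] at hdet
    linear_combination hdet
  have h10 : Q 1 0 = -r := by
    rw [h00, h21, h11] at o01; linear_combination -o01
  ext i j
  fin_cases i <;> fin_cases j <;> simp [Nmat, h00, h02, h10, h11, h12, h20, h21, h22] <;> ring

/-- the projective (ℝ⁺-) stabilizer of the light-cone vector
u₀ = (1,0,1) in SO₀(2,1) equals NA. -/
theorem stmt11 (M : Matrix (Fin 3) (Fin 3) ℝ) (hM : inSO0 M) :
    (∃ c : ℝ, 0 < c ∧ M *ᵥ ![(1 : ℝ), 0, 1] = c • ![(1 : ℝ), 0, 1]) ↔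
      ∃ r s : ℝ, M = Nmat r * Amat s := by
  obtain ⟨hη, hdet, -⟩ := hM
  constructor
  · rintro ⟨c, hc, hMu⟩
    set Q := M * Amat (-Real.log c)
    have hQu : Q *ᵥ u₀ = u₀ := by
      rw [← mulVec_mulVec, Amat_mulVec_u₀, mulVec_smul, hMu, smul_smul, Real.exp_neg,
        Real.exp_log hc, inv_mul_cancel₀ hc.ne', one_smul]
    have hQ : Q = Nmat (Q 0 1) :=
      eq_Nmat_of_mulVec_u₀ (eta_mul_mulVec hη (eta_Amat_mulVec _))
        (by rw [det_mul, hdet, det_Amat, one_mul]) hQu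
    refine ⟨Q 0 1, Real.log c, ?_⟩
    rw [← hQ, mul_assoc, Amat_neg_mul_Amat, mul_one]
  · rintro ⟨r, s, rfl⟩
    exact ⟨Real.exp s, Real.exp_pos s, by rw [← mulVec_mulVec, Amat_mulVec_u₀, mulVec_smul,
      Nmat_mulVec_u₀]⟩
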